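/- For all natural numbers m and n, the probabilist Hermite polynomials satisfy ∫_ℝ He_m(y) He_n(y) · (exp(−y²/2)/√(2π)) dy = n! if m = n and 0 otherwise. -/

import Mathlib

open MeasureTheory Polynomial

noncomputable def He : ℕ → Polynomial ℝ
  | 0 => 1
  | n + 1 => Polynomial.X * He n - (He n).derivative

noncomputable def T (r : Polynomial ℝ) : ℝ := ∫ y : ℝ, r.eval y * Real.exp (-y ^ 2 / 2)

lemma integrable_poly_gauss (p : Polynomial ℝ) :
    Integrable fun y : ℝ => p.eval y * Real.exp (-y ^ 2 / 2) := by
  induction p using Polynomial.induction_on' with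
  | add p q hp hq => simpa [add_mul, Pi.add_def] using hp.add hq
  | monomial n a =>
    have h := Real.rpow_natCast
    have := (integrable_rpow_mul_exp_neg_mul_sq (b := 1/2) (by norm_num)
      (s := (n : ℝ)) (neg_one_lt_zero.trans_le (Nat.cast_nonneg n))).const_mul a
    have he : ∀ x : ℝ, -(1/2 : ℝ) * x ^ 2 = -x ^ 2 / 2 := fun x => by ring
    simp only [he, Real.rpow_natCast] at this
    refine this.congr ?_
    filter_upwards with x
    simp [eval_monomial]; ring

lemma hasDerivAt_gauss (y : ℝ) :
    HasDerivAt (fun y : ℝ => Real.exp (-y ^ 2 / 2)) (-y * Real.exp (-y ^ 2 / 2)) y := by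
  have h1 : HasDerivAt (fun y : ℝ => -y ^ 2 / 2) (-y) y := by
    have := ((hasDerivAt_pow 2 y).neg).div_const 2
    simpa using this.congr_deriv (by push_cast; ring)
  simpa [mul_comm] using h1.exp

lemma T_key (p : Polynomial ℝ) : T (derivative p - X * p) = 0 := by
  have hderiv : ∀ y : ℝ, HasDerivAt (fun y : ℝ => p.eval y * Real.exp (-y ^ 2 / 2))
      ((derivative p - X * p).eval y * Real.exp (-y ^ 2 / 2)) y := by
    intro y
    have := (p.hasDerivAt y).mul (hasDerivAt_gauss y)
    refine this.congr_deriv ?_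
    simp [eval_sub, eval_mul]; ring
  exact integral_eq_zero_of_hasDerivAt_of_integrable hderiv
    (integrable_poly_gauss _) (integrable_poly_gauss p)

lemma T_sub (p q : Polynomial ℝ) : T (p - q) = T p - T q := by
  simp only [T, eval_sub, sub_mul]
  exact integral_sub (integrable_poly_gauss p) (integrable_poly_gauss q)

lemma T_Cmul (a : ℝ) (p : Polynomial ℝ) : T (C a * p) = a * T p := by
  simp only [T, eval_mul, eval_C, mul_assoc]
  exact integral_const_mul a _

lemma T_parts (p q : Polynomial ℝ) :
    T (p * (X * q - derivative q)) = T (derivative p * q) := by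
  have h := T_key (p * q)
  have e2 : derivative (p * q) - X * (p * q)
      = derivative p * q - p * (X * q - derivative q) := by
    rw [derivative_mul]; ring
  rw [e2, T_sub] at h
  linarith

lemma derivative_He (n : ℕ) : derivative (He (n + 1)) = C ((n : ℝ) + 1) * He n := by
  induction n with
  | zero => simp [He]
  | succ k ih =>
    show derivative (X * He (k+1) - derivative (He (k+1))) = _
    rw [derivative_sub, derivative_mul, derivative_X, ih, derivative_mul, derivative_C]
    push_cast
    show (1 : Polynomial ℝ) * He (k+1) + X * (C ((k:ℝ)+1) * He k)
        - (0 * He k + C ((k:ℝ)+1) * derivative (He k)) = C ((k:ℝ)+1+1) * He (k+1)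
    have h1 : He (k + 1) = X * He k - derivative (He k) := rfl
    rw [h1]
    simp only [map_add, map_one, map_natCast]
    ring

lemma T_zero : T 0 = 0 := by simp [T]

lemma T_one : T 1 = Real.sqrt (2 * Real.pi) := by
  have he : ∀ x : ℝ, -(1/2 : ℝ) * x ^ 2 = -x ^ 2 / 2 := fun x => by ring
  have := integral_gaussian (1/2)
  simp only [he] at this
  simp only [T, eval_one, one_mul, this]
  congr 1
  ring

lemma T_He_succ (m n : ℕ) :
    T (He m * He (n + 1)) = T (derivative (He m) * He n) := by
  have h1 : He (n + 1) = X * He n - derivative (He n) := rfl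
  rw [h1, T_parts]

lemma T_He_symm (m n : ℕ) : T (He m * He n) = T (He n * He m) := by rw [mul_comm]

lemma He_zero_eq : He 0 = 1 := rfl

lemma T_He_zero_succ (n : ℕ) : T (He 0 * He (n + 1)) = 0 := by
  rw [T_He_succ, He_zero_eq, derivative_one, zero_mul, T_zero]

lemma T_He_succ_succ (m n : ℕ) :
    T (He (m + 1) * He (n + 1)) = ((m : ℝ) + 1) * T (He m * He n) := by
  rw [T_He_succ, derivative_He, mul_assoc, T_Cmul]

lemma main_He : ∀ n m : ℕ, T (He m * He n)
    = (if m = n then (n.factorial : ℝ) else 0) * Real.sqrt (2 * Real.pi) := by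
  intro n
  induction n with
  | zero =>
    intro m
    match m with
    | 0 => simp [He_zero_eq, T_one]
    | m + 1 =>
      rw [T_He_symm, T_He_zero_succ]
      simp
  | succ k ih =>
    intro m
    match m with
    | 0 => rw [T_He_zero_succ]; simp
    | m + 1 =>
      rw [T_He_succ_succ, ih m]
      by_cases h : m = k
      · subst h
        simp [Nat.factorial_succ]
        ring
      · simp [h, fun hh : m + 1 = k + 1 => h (Nat.succ_injective hh)]

/-- Orthogonality of the probabilist Hermite polynomials with respect to the
standard Gaussian density: `∫ He_m He_n ρ = n!` if `m = n` and `0` otherwise,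
where `ρ(y) = exp(-y²/2)/√(2π)`. -/
theorem hermite_orthonormal (m n : ℕ) :
    ∫ y : ℝ, (He m).eval y * (He n).eval y *
        (Real.exp (-y ^ 2 / 2) / Real.sqrt (2 * Real.pi))
      = if m = n then (n.factorial : ℝ) else 0 := by
  have hs : Real.sqrt (2 * Real.pi) ≠ 0 := by
    positivity
  have h1 : ∀ y : ℝ, (He m).eval y * (He n).eval y *
        (Real.exp (-y ^ 2 / 2) / Real.sqrt (2 * Real.pi))
      = ((He m * He n).eval y * Real.exp (-y ^ 2 / 2)) / Real.sqrt (2 * Real.pi) := by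
    intro y; simp [eval_mul]; ring
  simp only [h1]
  rw [integral_div]
  have := main_He n m
  rw [show (∫ y : ℝ, (He m * He n).eval y * Real.exp (-y ^ 2 / 2)) = T (He m * He n) from rfl,
    this, mul_div_assoc, div_self hs, mul_one]
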